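/- Let κ ∈ Γ_k with κ₁ ≥ ⋯ ≥ κₙ ordered decreasingly and suppose σ_{k-1}(κ) ≤ σ_{k-2}(κ). Then κ_{k-1} ≤ C(n, k-2), where C(n, k-2) is the binomial coefficient 'n choose k-2'. -/

import Mathlib

noncomputable def esymm (n k : ℕ) (κ : Fin n → ℝ) : ℝ :=
  ∑ s ∈ Finset.powersetCard k (Finset.univ : Finset (Fin n)), ∏ i ∈ s, κ i

noncomputable def esymm1 (n m : ℕ) (κ : Fin n → ℝ) (i : Fin n) : ℝ :=
  ∑ s ∈ Finset.powersetCard m ((Finset.univ : Finset (Fin n)).erase i), ∏ j ∈ s, κ j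

noncomputable def esymm2 (n m : ℕ) (κ : Fin n → ℝ) (i j : Fin n) : ℝ :=
  ∑ s ∈ Finset.powersetCard m (((Finset.univ : Finset (Fin n)).erase i).erase j), ∏ l ∈ s, κ l

def GardingCone (n k : ℕ) : Set (Fin n → ℝ) :=
  {κ | ∀ m, 1 ≤ m → m ≤ k → 0 < esymm n m κ}

/-!
Since `σ_{k-1} ≤ σ_{k-2}`, it suffices to bound `σ_{k-1}(κ)` below by `κ₁ ⋯ κ_{k-1}` and
`σ_{k-2}(κ)` above by `C(n, k-2) κ₁ ⋯ κ_{k-2}`, and to know that `κ₁, …, κ_{k-2} > 0`.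

The lower bound and the positivity follow by peeling off `κ₁ = max κᵢ` (`σ₁ > 0` forces `κ₁ > 0`,
and `σ_m(κ) = κ₁ σ_{m-1}(κ') + σ_m(κ')`), once we know that deleting an entry of a vector in `Γ_k`
leaves a vector in `Γ_{k-1}`. Shifting all entries by `t ≥ 0` keeps a vector in `Γ_k`, so if the
shortened vector had `σ_{k-1} ≤ 0`, a suitable shift would put it in `Γ_{k-2}` with
`σ_{k-1} = 0 < σ_k`. This is impossible by Rolle's theorem: differentiating `∏ (X + κᵢ)` down to
degree `k` keeps it real-rooted and keeps the signs of `σ_0, …, σ_k`, so its roots would all be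
negative, forcing `σ_{k-1} > 0`.

For the upper bound, dropping the nonpositive entries only increases `σ_j` for `j ≤ k`, and a
decreasing list of `N` nonnegative numbers has `σ_m ≤ C(N, m)` times the product of its first `m`.
-/

open Polynomial

namespace Polynomial

theorem card_roots_derivative_eq_natDegree {p : ℝ[X]}
    (hp : Multiset.card p.roots = p.natDegree) :
    Multiset.card (derivative p).roots = (derivative p).natDegree := by
  have := card_roots_le_derivative p
  have := natDegree_derivative_le p
  have := card_roots' (derivative p)
  omega

theorem card_roots_iterate_derivative_eq_natDegree {p : ℝ[X]}
    (hp : Multiset.card p.roots = p.natDegree) (d : ℕ) :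
    Multiset.card (derivative^[d] p).roots = (derivative^[d] p).natDegree := by
  induction d with
  | zero => exact hp
  | succ d ih => rw [Function.iterate_succ_apply']; exact card_roots_derivative_eq_natDegree ih

end Polynomial

namespace Multiset

section CommSemiring

variable {R : Type*} [CommSemiring R]

@[simp]
theorem esymm_zero (s : Multiset R) : s.esymm 0 = 1 := by
  simp [esymm]

theorem esymm_one (s : Multiset R) : s.esymm 1 = s.sum := by
  simp [esymm, powersetCard_one, map_map]

theorem esymm_cons_succ (a : R) (s : Multiset R) (m : ℕ) :
    (a ::ₘ s).esymm (m + 1) = a * s.esymm m + s.esymm (m + 1) := by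
  simp only [esymm, powersetCard_cons, map_add, sum_add, map_map, Function.comp_def, prod_cons,
    sum_map_mul_left]
  ring

theorem esymm_eq_zero_of_card_lt {s : Multiset R} {m : ℕ} (h : card s < m) : s.esymm m = 0 := by
  simp [esymm, powersetCard_eq_empty _ h]

theorem le_card_of_esymm_ne_zero {s : Multiset R} {m : ℕ} (h : s.esymm m ≠ 0) : m ≤ card s :=
  not_lt.mp fun hlt => h (esymm_eq_zero_of_card_lt hlt)

theorem prod_X_add_C_map_add_const (s : Multiset R) (t : R) :
    ((s.map (· + t)).map fun r => X + C r).prod =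
      ∑ i ∈ Finset.range (card s + 1), C (s.esymm i) * (X + C t) ^ (card s - i) := by
  have := congrArg (fun p : R[X] => p.comp (X + C t)) (prod_X_add_C_eq_sum_esymm s)
  simp only [multiset_prod_comp, map_map, Function.comp_def, add_comp, X_comp, C_comp,
    sum_comp, mul_comp, pow_comp] at this
  rw [← this, map_map]
  congr 1
  refine map_congr rfl fun r _ => ?_
  simp only [Function.comp_apply, C_add]
  ring

theorem esymm_map_add_const (s : Multiset R) (t : R) {m : ℕ} (hm : m ≤ card s) :
    (s.map (· + t)).esymm m =
      ∑ i ∈ Finset.range (m + 1),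
        ((card s - i).choose (m - i) : R) * s.esymm i * t ^ (m - i) := by
  have hcoeff := congrArg (coeff · (card s - m)) (prod_X_add_C_map_add_const s t)
  simp only [finsetSum_coeff, coeff_C_mul, coeff_X_add_C_pow] at hcoeff
  rw [prod_X_add_C_coeff _ (by simp), card_map, Nat.sub_sub_self hm] at hcoeff
  rw [hcoeff,
    ← Finset.sum_subset (Finset.range_subset_range.mpr (by omega : m + 1 ≤ card s + 1))]
  · refine Finset.sum_congr rfl fun i hi => ?_
    rw [Finset.mem_range] at hi
    rw [Nat.choose_symm_of_eq_add (by omega : card s - i = (card s - m) + (m - i)),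
      (by omega : card s - i - (card s - m) = m - i)]
    ring
  · intro i hi hi'
    rw [Finset.mem_range] at hi hi'
    rw [Nat.choose_eq_zero_of_lt (by omega), Nat.cast_zero, mul_zero, mul_zero]

end CommSemiring

theorem esymm_pos {R : Type*} [CommSemiring R] [PartialOrder R] [IsStrictOrderedRing R]
    {s : Multiset R} (hs : ∀ x ∈ s, 0 < x) {m : ℕ} (hm : m ≤ card s) : 0 < s.esymm m := by
  obtain ⟨u, hu⟩ := exists_mem_of_ne_zero (s := s.powersetCard m) (by
    rw [← card_pos, card_powersetCard]; exact Nat.choose_pos hm)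
  have hpos : ∀ v ∈ s.powersetCard m, 0 < v.prod := fun v hv =>
    prod_pos fun x hx => hs x (mem_of_le (mem_powersetCard.mp hv).1 hx)
  refine (hpos u hu).trans_le (single_le_sum (fun x hx => ?_) _ (mem_map_of_mem _ hu))
  obtain ⟨v, hv, rfl⟩ := mem_map.mp hx
  exact (hpos v hv).le

section Ring

variable {R : Type*} [CommRing R]

theorem prod_X_add_C_eq_prod_X_sub_C_neg (s : Multiset R) :
    (s.map fun x => X + C x).prod = ((s.map Neg.neg).map fun a => X - C a).prod := by
  simp [map_map, sub_eq_add_neg]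

theorem natDegree_prod_X_add_C [Nontrivial R] (s : Multiset R) :
    (s.map fun x => X + C x).prod.natDegree = card s := by
  rw [prod_X_add_C_eq_prod_X_sub_C_neg, natDegree_multiset_prod_X_sub_C_eq_card, card_map]

theorem card_roots_prod_X_add_C [IsDomain R] (s : Multiset R) :
    card (s.map fun x => X + C x).prod.roots = (s.map fun x => X + C x).prod.natDegree := by
  rw [natDegree_prod_X_add_C, prod_X_add_C_eq_prod_X_sub_C_neg, roots_multiset_prod_X_sub_C,
    card_map]

end Ring

/-- `r` is the negated roots of the `(card s - j)`-th derivative of `∏ (X + x)`, which is still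
real-rooted by Rolle's theorem. -/
theorem exists_esymm_eq_mul_esymm (s : Multiset ℝ) {j : ℕ} (hj : j ≤ card s) :
    ∃ r : Multiset ℝ, card r = j ∧
      ∀ i ≤ j, ∃ c : ℝ, 0 < c ∧ r.esymm i = c * s.esymm i := by
  set f : ℝ[X] := (s.map fun x => X + C x).prod
  set d := card s - j
  set P := derivative^[d] f
  have hcoeff : ∀ i ≤ j, P.coeff (j - i) = (card s - i).descFactorial d * s.esymm i := by
    intro i hi
    rw [coeff_iterate_derivative, (by omega : j - i + d = card s - i), prod_X_add_C_coeff _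
      (by omega), Nat.sub_sub_self (by omega), nsmul_eq_mul]
  have hdesc : ∀ i ≤ j, (0 : ℝ) < (card s - i).descFactorial d := fun i hi => by
    exact_mod_cast Nat.descFactorial_pos.mpr (by omega)
  have hlead : P.coeff j = (card s).descFactorial d := by simpa using hcoeff 0 (Nat.zero_le _)
  have hlead_pos : (0 : ℝ) < (card s).descFactorial d := by simpa using hdesc 0 (Nat.zero_le _)
  have hdeg : P.natDegree = j := by
    refine le_antisymm ((natDegree_iterate_derivative f d).trans ?_)
      (le_natDegree_of_ne_zero (hlead ▸ hlead_pos.ne'))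
    rw [natDegree_prod_X_add_C]
    omega
  have hroots := card_roots_iterate_derivative_eq_natDegree (card_roots_prod_X_add_C s) d
  refine ⟨P.roots.map Neg.neg, by rw [card_map, hroots, hdeg], fun i hi => ?_⟩
  have hvieta := coeff_eq_esymm_roots_of_card hroots (k := j - i) (hdeg ▸ Nat.sub_le j i)
  rw [hdeg, Nat.sub_sub_self hi, leadingCoeff, hdeg, hlead, hcoeff i hi, mul_assoc,
    ← esymm_neg] at hvieta
  refine ⟨(card s - i).descFactorial d / (card s).descFactorial d,
    div_pos (hdesc i hi) hlead_pos, ?_⟩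
  field_simp
  linarith

theorem pos_of_esymm_nonneg {r : Multiset ℝ} (hr : ∀ i ≤ card r, 0 ≤ r.esymm i)
    (hlast : 0 < r.esymm (card r)) {x : ℝ} (hx : x ∈ r) : 0 < x := by
  by_contra! hx0
  have hroot : (r.map fun y => X + C y).prod.eval (-x) = 0 := by
    rw [eval_multiset_prod]
    exact prod_eq_zero (mem_map.mpr ⟨_, mem_map_of_mem _ hx, by simp⟩)
  simp only [prod_X_add_C_eq_sum_esymm, eval_finsetSum, eval_mul, eval_C, eval_pow,
    eval_X] at hroot
  have hterm : ∀ i ∈ Finset.range (card r + 1), 0 ≤ r.esymm i * (-x) ^ (card r - i) :=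
    fun i hi => mul_nonneg (hr i (Finset.mem_range_succ_iff.mp hi)) (pow_nonneg (by linarith) _)
  have := Finset.single_le_sum hterm (Finset.self_mem_range_succ (card r))
  rw [Nat.sub_self, pow_zero, mul_one, hroot] at this
  linarith

/-- The Gårding cone `Γ_k`, for a multiset of reals. -/
def InGardingCone (k : ℕ) (s : Multiset ℝ) : Prop :=
  ∀ m, 1 ≤ m → m ≤ k → 0 < s.esymm m

namespace InGardingCone

variable {k : ℕ} {s : Multiset ℝ}

theorem mono (h : InGardingCone k s) {j : ℕ} (hjk : j ≤ k) : InGardingCone j s :=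
  fun m h1 h2 => h m h1 (h2.trans hjk)

theorem esymm_nonneg (h : InGardingCone k s) {i : ℕ} (hi : i ≤ k) : 0 ≤ s.esymm i := by
  rcases Nat.eq_zero_or_pos i with rfl | hi0
  · simp
  · exact (h i hi0 hi).le

theorem le_card (h : InGardingCone k s) : k ≤ card s := by
  rcases Nat.eq_zero_or_pos k with rfl | hk
  · exact Nat.zero_le _
  · exact le_card_of_esymm_ne_zero (h k hk le_rfl).ne'

theorem map_add_const (h : InGardingCone k s) {t : ℝ} (ht : 0 ≤ t) :
    InGardingCone k (s.map (· + t)) := by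
  intro m hm1 hmk
  rw [esymm_map_add_const s t (hmk.trans h.le_card)]
  have hterm : ∀ i ∈ Finset.range (m + 1),
      0 ≤ ((card s - i).choose (m - i) : ℝ) * s.esymm i * t ^ (m - i) := fun i hi => by
    have := h.esymm_nonneg (i := i) (by rw [Finset.mem_range] at hi; omega)
    positivity
  have := Finset.single_le_sum hterm (Finset.self_mem_range_succ m)
  simp only [Nat.sub_self, Nat.choose_zero_right, Nat.cast_one, one_mul, pow_zero,
    mul_one] at this
  exact (h m hm1 hmk).trans_le this

theorem exists_esymm_map_add_const_pos (h : InGardingCone k s) (hk : k + 1 ≤ card s) :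
    ∃ T, 0 ≤ T ∧ 0 < (s.map (· + T)).esymm (k + 1) := by
  set T := 1 + |s.esymm (k + 1)|
  have hT : 1 ≤ T := le_add_of_nonneg_right (abs_nonneg _)
  refine ⟨T, by linarith, ?_⟩
  rw [esymm_map_add_const s T hk]
  have hsub : ({0, k + 1} : Finset ℕ) ⊆ Finset.range (k + 1 + 1) := by
    simp only [Finset.insert_subset_iff, Finset.singleton_subset_iff, Finset.mem_range]
    omega
  have hrest : ∀ i ∈ Finset.range (k + 1 + 1), i ∉ ({0, k + 1} : Finset ℕ) →
      0 ≤ ((card s - i).choose (k + 1 - i) : ℝ) * s.esymm i * T ^ (k + 1 - i) := by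
    intro i hi hi'
    simp only [Finset.mem_insert, Finset.mem_singleton, Finset.mem_range] at hi hi'
    have := h.esymm_nonneg (i := i) (by omega)
    positivity
  refine lt_of_lt_of_le ?_ (Finset.sum_le_sum_of_subset_of_nonneg hsub hrest)
  rw [Finset.sum_pair (by omega)]
  have hchoose : (1 : ℝ) ≤ (card s).choose (k + 1) := by exact_mod_cast Nat.choose_pos hk
  have hpow : T ≤ T ^ (k + 1) := le_self_pow₀ hT (by omega)
  simp only [Nat.sub_zero, esymm_zero, mul_one, Nat.sub_self, Nat.choose_zero_right,
    Nat.cast_one, one_mul, pow_zero]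
  nlinarith [neg_abs_le (s.esymm (k + 1))]

theorem exists_esymm_map_add_const_eq_zero (h : InGardingCone k s) (hk : k + 1 ≤ card s)
    (hle : s.esymm (k + 1) ≤ 0) : ∃ t, 0 ≤ t ∧ (s.map (· + t)).esymm (k + 1) = 0 := by
  obtain ⟨T, hT, hpos⟩ := h.exists_esymm_map_add_const_pos hk
  have hcont : Continuous fun t => (s.map (· + t)).esymm (k + 1) := by
    simp_rw [esymm_map_add_const s _ hk]
    fun_prop
  obtain ⟨t, ⟨ht, -⟩, hzero⟩ :=
    intermediate_value_Icc hT hcont.continuousOn ⟨by simpa using hle, hpos.le⟩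
  exact ⟨t, ht, hzero⟩

/-- A weak form of Newton's inequality `σ_{k+1}² ≥ c σ_k σ_{k+2}`. -/
theorem esymm_succ_ne_zero (h : InGardingCone k s) (hpos : 0 < s.esymm (k + 2)) :
    s.esymm (k + 1) ≠ 0 := by
  intro hzero
  obtain ⟨r, hr, hc⟩ := exists_esymm_eq_mul_esymm s (le_card_of_esymm_ne_zero hpos.ne')
  have hr_nonneg : ∀ i ≤ card r, 0 ≤ r.esymm i := by
    intro i hi
    obtain ⟨c, hc0, hci⟩ := hc i (hr ▸ hi)
    rw [hci]
    refine mul_nonneg hc0.le ?_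
    rcases (by omega : i ≤ k ∨ i = k + 1 ∨ i = k + 2) with hik | rfl | rfl
    · exact h.esymm_nonneg hik
    · exact hzero.ge
    · exact hpos.le
  have hr_last : 0 < r.esymm (card r) := by
    obtain ⟨c, hc0, hck⟩ := hc (k + 2) le_rfl
    rw [hr, hck]
    positivity
  obtain ⟨c, -, hck⟩ := hc (k + 1) (by omega)
  have := esymm_pos (fun x hx => pos_of_esymm_nonneg hr_nonneg hr_last hx) (m := k + 1) (by omega)
  rw [hck, hzero, mul_zero] at this
  exact this.false

theorem of_cons {a : ℝ} (h : InGardingCone (k + 1) (a ::ₘ s)) : InGardingCone k s := by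
  induction k generalizing a s with
  | zero => intro m h1 h2; omega
  | succ k ih =>
    have hk := ih (h.mono (by omega))
    intro m hm1 hm
    rcases Nat.lt_or_eq_of_le hm with hm | rfl
    · exact hk m hm1 (by omega)
    by_contra! hle
    have hcard : k + 1 ≤ card s := by simpa using h.le_card
    obtain ⟨t, ht, hzero⟩ := hk.exists_esymm_map_add_const_eq_zero hcard hle
    have hshift := h.map_add_const ht
    rw [map_cons] at hshift
    have hpos : 0 < (s.map (· + t)).esymm (k + 2) := by
      simpa [esymm_cons_succ, hzero] using hshift (k + 2) (by omega) le_rfl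
    exact (ih (hshift.mono (by omega))).esymm_succ_ne_zero hpos hzero

theorem esymm_cons_le_of_nonpos {a : ℝ} (ha : a ≤ 0) (h : InGardingCone k (a ::ₘ s)) {m : ℕ}
    (hm : m ≤ k) : (a ::ₘ s).esymm m ≤ s.esymm m := by
  induction m with
  | zero => simp
  | succ m ih =>
    rw [esymm_cons_succ]
    have := (h.esymm_nonneg (by omega : m ≤ k)).trans (ih (by omega))
    nlinarith

theorem esymm_add_le_of_nonpos {t : Multiset ℝ} (ht : ∀ x ∈ t, x ≤ 0)
    (h : InGardingCone k (s + t)) {m : ℕ} (hm : m ≤ k) : (s + t).esymm m ≤ s.esymm m := by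
  induction t using Multiset.induction_on with
  | empty => simp
  | cons a t ih =>
    rw [add_cons] at h ⊢
    have ha := ht a (mem_cons_self a t)
    have h' : InGardingCone k (s + t) := fun j h1 h2 =>
      (h j h1 h2).trans_le (esymm_cons_le_of_nonpos ha h h2)
    exact (esymm_cons_le_of_nonpos ha h hm).trans
      (ih (fun x hx => ht x (mem_cons_of_mem hx)) h')

end InGardingCone

end Multiset

namespace List

open Multiset (InGardingCone esymm_one esymm_cons_succ esymm_eq_zero_of_card_lt cons_coe)

variable {l : List ℝ}

theorem nonpos_of_mem_dropWhile_pos (hl : l.Pairwise (· ≥ ·)) {x : ℝ}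
    (hx : x ∈ l.dropWhile (0 < ·)) : x ≤ 0 := by
  induction l with
  | nil => simp at hx
  | cons a l ih =>
    rw [pairwise_cons] at hl
    by_cases ha : 0 < a
    · rw [dropWhile_cons_of_pos (by simpa using ha)] at hx
      exact ih hl.2 hx
    · rw [dropWhile_cons_of_neg (by simpa using ha), mem_cons] at hx
      rcases hx with rfl | hx
      · exact not_lt.mp ha
      · exact (hl.1 x hx).trans (not_lt.mp ha)

theorem pos_head_of_inGardingCone {a : ℝ} (hl : (a :: l).Pairwise (· ≥ ·))
    (h : InGardingCone 1 ↑(a :: l)) : 0 < a := by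
  by_contra! ha
  have hle : ∀ x ∈ (↑(a :: l) : Multiset ℝ), x ≤ 0 := by
    rw [pairwise_cons] at hl
    intro x hx
    rcases mem_cons.mp (Multiset.mem_coe.mp hx) with rfl | hx
    exacts [ha, (hl.1 x hx).trans ha]
  have hsum := h 1 le_rfl le_rfl
  rw [esymm_one] at hsum
  have := Multiset.sum_le_card_nsmul _ 0 hle
  rw [smul_zero] at this
  linarith

theorem pos_of_mem_take (hl : l.Pairwise (· ≥ ·)) {k : ℕ} (h : InGardingCone k ↑l) {x : ℝ}
    (hx : x ∈ l.take k) : 0 < x := by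
  induction l generalizing k with
  | nil => simp at hx
  | cons a l ih =>
    obtain _ | k := k
    · simp at hx
    rw [take_succ_cons, mem_cons] at hx
    rcases hx with rfl | hx
    · exact pos_head_of_inGardingCone hl (h.mono (by omega))
    · rw [← cons_coe] at h
      exact ih hl.of_cons h.of_cons hx

theorem prod_take_le_esymm (hl : l.Pairwise (· ≥ ·)) {m : ℕ}
    (h : InGardingCone (m + 1) ↑l) : (l.take m).prod ≤ (l : Multiset ℝ).esymm m := by
  induction l generalizing m with
  | nil =>
    obtain _ | m := m
    · simp
    · have := h 1 le_rfl (by omega)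
      rw [esymm_eq_zero_of_card_lt (by simp)] at this
      exact (lt_irrefl 0 this).elim
  | cons a l ih =>
    obtain _ | m := m
    · simp
    have ha := pos_head_of_inGardingCone hl (h.mono (by omega))
    rw [← cons_coe] at h
    have htail := h.of_cons
    rw [take_succ_cons, prod_cons, ← cons_coe, esymm_cons_succ]
    have := ih hl.of_cons htail
    have := htail (m + 1) (by omega) le_rfl
    nlinarith

theorem esymm_le_choose_mul_prod_take (hl : l.Pairwise (· ≥ ·)) (hl0 : ∀ x ∈ l, 0 ≤ x)
    (m : ℕ) : (l : Multiset ℝ).esymm m ≤ l.length.choose m * (l.take m).prod := by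
  induction l generalizing m with
  | nil =>
    obtain _ | m := m
    · simp
    · rw [esymm_eq_zero_of_card_lt (by simp)]
      simp
  | cons a l ih =>
    obtain _ | m := m
    · simp
    rw [pairwise_cons] at hl
    have ha : 0 ≤ a := hl0 a mem_cons_self
    have hl0' : ∀ x ∈ l, 0 ≤ x := fun x hx => hl0 x (mem_cons_of_mem a hx)
    have hP : 0 ≤ (l.take m).prod := prod_nonneg fun x hx => hl0' x (mem_of_mem_take hx)
    have hnext : (l.length.choose (m + 1) : ℝ) * (l.take (m + 1)).prod ≤
        l.length.choose (m + 1) * (a * (l.take m).prod) := by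
      rcases lt_or_ge l.length (m + 1) with hlen | hlen
      · simp [Nat.choose_eq_zero_of_lt hlen]
      rw [prod_take_succ l m (by omega), mul_comm a]
      gcongr
      exact hl.1 _ (getElem_mem _)
    rw [← cons_coe, esymm_cons_succ, take_succ_cons, prod_cons, length_cons,
      Nat.choose_succ_succ', Nat.cast_add]
    have := ih hl.2 hl0' m
    have := ih hl.2 hl0' (m + 1)
    nlinarith

theorem esymm_le_choose_mul_prod_take_of_inGardingCone (hl : l.Pairwise (· ≥ ·)) {k : ℕ}
    (h : InGardingCone k ↑l) {m : ℕ} (hm : m ≤ k) :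
    (l : Multiset ℝ).esymm m ≤ l.length.choose m * (l.take m).prod := by
  set p := l.takeWhile (0 < ·)
  have hpl : p ++ l.dropWhile (0 < ·) = l := takeWhile_append_dropWhile
  rw [← hpl, ← Multiset.coe_add] at h
  have hq : ∀ x ∈ l.dropWhile (0 < ·), x ≤ 0 := fun x hx => nonpos_of_mem_dropWhile_pos hl hx
  have hp : InGardingCone k ↑p := fun j h1 h2 =>
    (h j h1 h2).trans_le (h.esymm_add_le_of_nonpos hq h2)
  have hmp : m ≤ p.length := hm.trans hp.le_card
  have hpsub : p <+ l := takeWhile_sublist _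
  calc (l : Multiset ℝ).esymm m ≤ (p : Multiset ℝ).esymm m := by
        rw [← hpl, ← Multiset.coe_add]; exact h.esymm_add_le_of_nonpos hq hm
    _ ≤ p.length.choose m * (p.take m).prod :=
        esymm_le_choose_mul_prod_take (hl.sublist hpsub)
          (fun x hx => (show 0 < x by simpa using mem_takeWhile_imp hx).le) m
    _ ≤ l.length.choose m * (l.take m).prod := by
        have hP : 0 ≤ (p.take m).prod :=
          prod_nonneg fun x hx =>
            (show 0 < x by simpa using mem_takeWhile_imp (mem_of_mem_take hx)).le
        rw [show l.take m = p.take m by rw [← hpl, take_append_of_le_length hmp]]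
        gcongr
        exact hpsub.length_le

end List

theorem esymm_eq_multiset_esymm_ofFn (n m : ℕ) (κ : Fin n → ℝ) :
    esymm n m κ = (↑(List.ofFn κ) : Multiset ℝ).esymm m := by
  rw [esymm, ← Finset.esymm_map_val, Fin.univ_val_map]

theorem kappa_km1_bound (n k : ℕ) (hk : 3 ≤ k) (hkn : k ≤ n)
    (κ : Fin n → ℝ) (hκ : κ ∈ GardingCone n k) (hdec : Antitone κ)
    (h : esymm n (k - 1) κ ≤ esymm n (k - 2) κ) :
    κ ⟨k - 2, by omega⟩ ≤ (n.choose (k - 2) : ℝ) := by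
  set l := List.ofFn κ
  have hl : l.Pairwise (· ≥ ·) := hdec.sortedGE_ofFn.pairwise
  have hΓ : Multiset.InGardingCone k ↑l := fun m h1 h2 =>
    esymm_eq_multiset_esymm_ofFn n m κ ▸ hκ m h1 h2
  rw [esymm_eq_multiset_esymm_ofFn, esymm_eq_multiset_esymm_ofFn] at h
  have hlower := List.prod_take_le_esymm hl (hΓ.mono (by omega : k - 1 + 1 ≤ k))
  have hupper := List.esymm_le_choose_mul_prod_take_of_inGardingCone hl hΓ (by omega : k - 2 ≤ k)
  rw [List.length_ofFn] at hupper
  have hpos : 0 < (l.take (k - 2)).prod :=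
    List.prod_pos fun x hx => List.pos_of_mem_take hl (hΓ.mono (by omega)) hx
  have hsplit : (l.take (k - 1)).prod = (l.take (k - 2)).prod * κ ⟨k - 2, by omega⟩ := by
    rw [show k - 1 = k - 2 + 1 by omega, List.prod_take_succ _ _ (by simp [l]; omega),
      List.getElem_ofFn]
  refine le_of_mul_le_mul_left ?_ hpos
  calc (l.take (k - 2)).prod * κ ⟨k - 2, by omega⟩
      = (l.take (k - 1)).prod := hsplit.symm
    _ ≤ (l : Multiset ℝ).esymm (k - 1) := hlower
    _ ≤ (l : Multiset ℝ).esymm (k - 2) := h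
    _ ≤ n.choose (k - 2) * (l.take (k - 2)).prod := hupper
    _ = (l.take (k - 2)).prod * n.choose (k - 2) := mul_comm _ _
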